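/- Let a, b be pseudo Drazin invertible elements of a Banach algebra A with ab = λ ba, λ ≠ 0. Then ab is pseudo Drazin invertible and (ab)^‡ = b^‡ a^‡ = λ^(−1) a^‡ b^‡. -/

import Mathlib

/-- Membership in the Jacobson radical of a ring. -/
def MemJacobson {A : Type*} [Ring A] (x : A) : Prop := ∀ y : A, IsUnit (1 - y * x)

/-- `b` is a pseudo Drazin inverse of `a`. -/
def IsPDrazinInv {A : Type*} [Ring A] (a b : A) : Prop :=
  a * b = b * a ∧ b * a * b = b ∧ ∃ k : ℕ, 1 ≤ k ∧ MemJacobson (a ^ k - a ^ (k + 1) * b)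

/-
The pseudo Drazin inverse `bd` of `b` comes with the idempotent `e = b bd`, and `b (1 - e)` has a
power in the Jacobson radical, hence is quasinilpotent. If `a b = μ b a`, each corner
`(1 - e) a e`, `e a (1 - e)` is reproduced, up to a scalar, by multiplying it with this
quasinilpotent on one side and with `bd` on the other; iterating and Gelfand's formula force both
corners to vanish. So `a` commutes with `e`, which gives `bd a = μ a bd`. Three applications yield
all skew-commutation relations among `a, ad, b, bd`, and then `bd ad` is checked by hand to be a
pseudo Drazin inverse of `a b`: with `p = a ad`, `q = b bd` one has `1 - pq = (1 - p) + p (1 - q)`,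
and `(a b)^m` is a scalar multiple of `a^m b^m`.
-/

open Filter
open scoped ENNReal

-- Jacobson's lemma: `spectrum.unit_mem_mul_comm` over `ℤ` at the unit `1`.
theorem isUnit_one_sub_mul_comm {R : Type*} [Ring R] {a b : R} :
    IsUnit (1 - a * b) ↔ IsUnit (1 - b * a) := by
  simpa [spectrum.mem_iff] using
    (spectrum.unit_mem_mul_comm (R := ℤ) (a := a) (b := b) (r := 1)).not

theorem pow_sub_pow_succ_mul {R : Type*} [Ring R] (a b : R) (k : ℕ) :
    a ^ k - a ^ (k + 1) * b = a ^ k * (1 - a * b) := by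
  rw [pow_succ, mul_assoc, mul_sub, mul_one]

namespace MemJacobson

variable {R : Type*} [Ring R] {x y : R}

theorem mul_left (z : R) (hx : MemJacobson x) : MemJacobson (z * x) := fun w => by
  simpa only [mul_assoc] using hx (w * z)

theorem mul_right (z : R) (hx : MemJacobson x) : MemJacobson (x * z) := fun w =>
  isUnit_one_sub_mul_comm.mp <| by
    simpa only [mul_assoc] using isUnit_one_sub_mul_comm.mp (hx (z * w))

theorem add (hx : MemJacobson x) (hy : MemJacobson y) : MemJacobson (x + y) := fun w => by
  obtain ⟨u, hu⟩ := hx w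
  have : 1 - w * (x + y) = u * (1 - ↑u⁻¹ * w * y) := by
    rw [mul_sub, mul_one, ← mul_assoc, ← mul_assoc, Units.mul_inv, one_mul, hu]
    noncomm_ring
  rw [this]
  exact u.isUnit.mul (hy _)

theorem smul {𝕜 : Type*} [CommSemiring 𝕜] [Algebra 𝕜 R] (c : 𝕜) (hx : MemJacobson x) :
    MemJacobson (c • x) := by
  rw [Algebra.smul_def]
  exact hx.mul_left _

theorem spectrum_subset_zero {𝕜 : Type*} [Field 𝕜] [Algebra 𝕜 R] (hx : MemJacobson x) :
    spectrum 𝕜 x ⊆ {0} := by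
  intro z hz
  by_contra hz0
  apply spectrum.mem_iff.mp hz
  have : algebraMap 𝕜 R z - x = algebraMap 𝕜 R z * (1 - algebraMap 𝕜 R z⁻¹ * x) := by
    rw [mul_sub, mul_one, ← mul_assoc, ← map_mul, mul_inv_cancel₀ hz0, map_one, one_mul]
  rw [this]
  exact ((Ne.isUnit hz0).map _).mul (hx _)

theorem spectralRadius_eq_zero {𝕜 : Type*} [NormedField 𝕜] [Algebra 𝕜 R]
    (hx : MemJacobson x) : spectralRadius 𝕜 x = 0 :=
  nonpos_iff_eq_zero.mp <| iSup₂_le fun z hz => by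
    simp [show z = 0 from hx.spectrum_subset_zero hz]

end MemJacobson

theorem spectralRadius_eq_zero_of_pow {𝕜 A : Type*} [NormedField 𝕜] [Ring A] [Algebra 𝕜 A]
    {a : A} {k : ℕ} (hk : k ≠ 0) (h : spectralRadius 𝕜 (a ^ k) = 0) :
    spectralRadius 𝕜 a = 0 :=
  (pow_eq_zero_iff hk).mp <| nonpos_iff_eq_zero.mp <| h ▸ spectrum.spectralRadius_pow_le a k hk

theorem eq_pow_smul_pow_mul_mul_pow {R A : Type*} [CommSemiring R] [Semiring A] [Algebra R A]
    {p q x : A} {μ : R} (h : x = μ • (p * x * q)) (m : ℕ) :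
    x = μ ^ m • (p ^ m * x * q ^ m) := by
  induction m with
  | zero => simp
  | succ m ih =>
    calc x = μ ^ m • (p ^ m * x * q ^ m) := ih
      _ = μ ^ m • (p ^ m * (μ • (p * x * q)) * q ^ m) := by rw [← h]
      _ = μ ^ (m + 1) • (p ^ (m + 1) * x * q ^ (m + 1)) := by
        simp only [pow_succ, pow_succ' q, mul_smul_comm, smul_mul_assoc, smul_smul, mul_assoc]

section Quasinilpotent

variable {A : Type*} [NormedRing A] [NormedAlgebra ℂ A] [CompleteSpace A]

theorem exists_pow_mul_norm_pow_lt_one {a : A} (ha : spectralRadius ℂ a = 0) {C : ℝ}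
    (hC : 0 ≤ C) : ∃ m, m ≠ 0 ∧ C ^ m * ‖a ^ m‖ < 1 := by
  have hε : (0 : ℝ≥0∞) < ENNReal.ofReal (1 / (C + 1)) := by simp; positivity
  have hgelfand := spectrum.pow_norm_pow_one_div_tendsto_nhds_spectralRadius a
  obtain ⟨m, hm, hm0⟩ :=
    ((hgelfand.eventually_lt_const (ha ▸ hε)).and (eventually_ne_atTop 0)).exists
  rw [ENNReal.ofReal_lt_ofReal_iff (by positivity)] at hm
  refine ⟨m, hm0, ?_⟩
  calc C ^ m * ‖a ^ m‖ ≤ (C + 1) ^ m * ‖a ^ m‖ := by gcongr; linarith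
    _ = ((C + 1) * ‖a ^ m‖ ^ (1 / m : ℝ)) ^ m := by
      rw [mul_pow, one_div, Real.rpow_inv_natCast_pow (norm_nonneg _) hm0]
    _ < 1 := pow_lt_one₀ (by positivity) ((lt_div_iff₀' (by positivity)).mp hm) hm0

theorem eq_zero_of_eq_smul_mul_mul {p q x : A} {μ : ℂ} (h : x = μ • (p * x * q))
    (hpq : spectralRadius ℂ p = 0 ∨ spectralRadius ℂ q = 0) : x = 0 := by
  obtain ⟨n, w, hn, hnw⟩ : ∃ n w : A, spectralRadius ℂ n = 0 ∧
      ∀ m, m ≠ 0 → ‖p ^ m‖ * ‖q ^ m‖ ≤ ‖n ^ m‖ * ‖w‖ ^ m := by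
    rcases hpq with hp | hq
    · exact ⟨p, q, hp, fun m hm => by gcongr; exact norm_pow_le' q (by omega)⟩
    · exact ⟨q, p, hq, fun m hm => by rw [mul_comm]; gcongr; exact norm_pow_le' p (by omega)⟩
  obtain ⟨m, hm0, hm⟩ := exists_pow_mul_norm_pow_lt_one hn (C := ‖μ‖ * ‖w‖) (by positivity)
  have hx : ‖x‖ ≤ (‖μ‖ * ‖w‖) ^ m * ‖n ^ m‖ * ‖x‖ :=
    calc ‖x‖ = ‖μ‖ ^ m * ‖p ^ m * x * q ^ m‖ := by
          rw [← norm_pow, ← norm_smul, ← eq_pow_smul_pow_mul_mul_pow h m]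
      _ ≤ ‖μ‖ ^ m * (‖p ^ m‖ * ‖x‖ * ‖q ^ m‖) := by gcongr; exact norm_mul₃_le
      _ = ‖μ‖ ^ m * (‖p ^ m‖ * ‖q ^ m‖) * ‖x‖ := by ring
      _ ≤ ‖μ‖ ^ m * (‖n ^ m‖ * ‖w‖ ^ m) * ‖x‖ := by gcongr ‖μ‖ ^ m * ?_ * ‖x‖; exact hnw m hm0
      _ = (‖μ‖ * ‖w‖) ^ m * ‖n ^ m‖ * ‖x‖ := by ring
  exact norm_le_zero_iff.mp (by nlinarith [norm_nonneg x])

end Quasinilpotent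

section SkewCommute

variable {R A : Type*} [CommSemiring R] [Semiring A] [Algebra R A] {a b : A} {μ : R}

theorem pow_mul_eq_smul_mul_pow (h : b * a = μ • (a * b)) (m : ℕ) :
    b ^ m * a = μ ^ m • (a * b ^ m) := by
  induction m with
  | zero => simp
  | succ m ih =>
    calc b ^ (m + 1) * a = b * (b ^ m * a) := by rw [pow_succ', mul_assoc]
      _ = μ ^ m • (b * a * b ^ m) := by rw [ih, mul_smul_comm, mul_assoc]
      _ = μ ^ (m + 1) • (a * b ^ (m + 1)) := by
        rw [h, smul_mul_assoc, smul_smul, ← pow_succ, mul_assoc, ← pow_succ']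

theorem mul_pow_eq_smul_pow_mul_pow (h : b * a = μ • (a * b)) (m : ℕ) :
    (a * b) ^ m = μ ^ m.choose 2 • (a ^ m * b ^ m) := by
  induction m with
  | zero => simp
  | succ m ih =>
    calc (a * b) ^ (m + 1) = μ ^ m.choose 2 • (a ^ m * (b ^ m * a) * b) := by
          rw [pow_succ, ih, smul_mul_assoc]; simp only [mul_assoc]
      _ = μ ^ (m + 1).choose 2 • (a ^ (m + 1) * b ^ (m + 1)) := by
        have hc : (m + 1).choose 2 = m.choose 2 + m := by
          rw [Nat.choose_succ_succ', Nat.choose_one_right, add_comm]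
        rw [pow_mul_eq_smul_mul_pow h, hc, pow_add, mul_smul_comm, smul_mul_assoc, smul_smul,
          pow_succ _ m, pow_succ _ m]
        simp only [mul_assoc]

end SkewCommute

namespace IsPDrazinInv

section Ring

variable {R : Type*} [Ring R] {b bd : R}

theorem isIdempotentElem_mul (hb : IsPDrazinInv b bd) : IsIdempotentElem (b * bd) := by
  rw [IsIdempotentElem, mul_assoc, ← mul_assoc bd, hb.2.1]

theorem inv_mul_mul (hb : IsPDrazinInv b bd) : bd * (b * bd) = bd := by
  rw [← mul_assoc, hb.2.1]

theorem mul_inv_mul (hb : IsPDrazinInv b bd) : b * bd * bd = bd := by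
  rw [hb.1, hb.2.1]

theorem commute_one_sub_mul (hb : IsPDrazinInv b bd) : Commute b (1 - b * bd) :=
  (Commute.one_right b).sub_right ((Commute.refl b).mul_right hb.1)

theorem pow_mul_one_sub (hb : IsPDrazinInv b bd) {k : ℕ} (hk : k ≠ 0) :
    (b * (1 - b * bd)) ^ k = b ^ k - b ^ (k + 1) * bd := by
  rw [hb.commute_one_sub_mul.mul_pow, hb.isIdempotentElem_mul.one_sub.pow_eq hk,
    pow_sub_pow_succ_mul]

theorem eventually_memJacobson (hb : IsPDrazinInv b bd) :
    ∀ᶠ m in atTop, MemJacobson (b ^ m * (1 - b * bd)) := by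
  obtain ⟨k, -, hk⟩ := hb.2.2
  filter_upwards [eventually_ge_atTop k] with m hm
  obtain ⟨j, rfl⟩ := Nat.exists_eq_add_of_le' hm
  rw [pow_sub_pow_succ_mul] at hk
  simpa only [pow_add, mul_assoc] using hk.mul_left (b ^ j)

theorem inv_mul_eq_smul_of_commute {𝕜 : Type*} [CommSemiring 𝕜] [Algebra 𝕜 R] {a : R} {μ : 𝕜}
    (hb : IsPDrazinInv b bd) (h : a * b = μ • (b * a))
    (ha : Commute a (b * bd)) : bd * a = μ • (a * bd) :=
  calc bd * a = bd * (b * bd) * a := by rw [hb.inv_mul_mul]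
    _ = bd * (a * b) * bd := by rw [mul_assoc, ← ha.eq]; simp only [mul_assoc]
    _ = μ • (bd * b * a * bd) := by rw [h, mul_smul_comm, smul_mul_assoc]; simp only [mul_assoc]
    _ = μ • (a * bd) := by rw [← hb.1, ← ha.eq, mul_assoc, hb.mul_inv_mul]

theorem spectralRadius_mul_one_sub_eq_zero {𝕜 : Type*} [NormedField 𝕜] [Algebra 𝕜 R]
    (hb : IsPDrazinInv b bd) : spectralRadius 𝕜 (b * (1 - b * bd)) = 0 := by
  obtain ⟨k, hk, hJ⟩ := hb.2.2
  refine spectralRadius_eq_zero_of_pow (k := k) (by omega) ?_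
  rw [hb.pow_mul_one_sub (by omega)]
  exact hJ.spectralRadius_eq_zero

end Ring

section Banach

variable {A : Type*} [NormedRing A] [NormedAlgebra ℂ A] [CompleteSpace A] {a b bd : A} {μ : ℂ}

theorem commute_of_mul_eq_smul (hb : IsPDrazinInv b bd) (hμ : μ ≠ 0)
    (h : a * b = μ • (b * a)) : Commute a (b * bd) := by
  have hn : spectralRadius ℂ (b * (1 - b * bd)) = 0 := hb.spectralRadius_mul_one_sub_eq_zero
  have hff := hb.isIdempotentElem_mul.one_sub.eq
  have hbf := hb.commute_one_sub_mul.eq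
  have hebd := hb.mul_inv_mul
  have hbde := hb.inv_mul_mul
  have hbdb : bd * b = b * bd := hb.1.symm
  have hba : b * a = μ⁻¹ • (a * b) := ((inv_smul_eq_iff₀ hμ).mpr h).symm
  generalize he : b * bd = e at *
  have hx : (1 - e) * a * e = 0 := by
    refine eq_zero_of_eq_smul_mul_mul (p := b * (1 - e)) (q := bd) (μ := μ) ?_ (.inl hn)
    have step : b * (1 - e) * ((1 - e) * a * e) * bd = μ⁻¹ • ((1 - e) * a * e) :=
      calc b * (1 - e) * ((1 - e) * a * e) * bd = b * ((1 - e) * (1 - e)) * a * (e * bd) := by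
            simp only [mul_assoc]
        _ = (1 - e) * (b * a) * bd := by rw [hff, hebd, hbf]; simp only [mul_assoc]
        _ = μ⁻¹ • ((1 - e) * a * e) := by
            rw [hba, mul_smul_comm, smul_mul_assoc, ← he]; simp only [mul_assoc]
    rw [step, smul_inv_smul₀ hμ]
  have hy : e * a * (1 - e) = 0 := by
    refine eq_zero_of_eq_smul_mul_mul (p := bd) (q := b * (1 - e)) (μ := μ⁻¹) ?_ (.inr hn)
    have step : bd * (e * a * (1 - e)) * (b * (1 - e)) = μ • (e * a * (1 - e)) :=
      calc bd * (e * a * (1 - e)) * (b * (1 - e)) = bd * e * a * ((1 - e) * (1 - e) * b) := by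
            rw [hbf]; simp only [mul_assoc]
        _ = bd * (a * b) * (1 - e) := by rw [hbde, hff, ← hbf]; simp only [mul_assoc]
        _ = μ • (e * a * (1 - e)) := by
            rw [h, mul_smul_comm, smul_mul_assoc, ← hbdb]; simp only [mul_assoc]
    rw [step, inv_smul_smul₀ hμ]
  rw [sub_mul, one_mul, sub_mul, sub_eq_zero] at hx
  rw [mul_sub, mul_one, sub_eq_zero] at hy
  exact hx.trans hy.symm

theorem inv_mul_eq_smul (hb : IsPDrazinInv b bd) (hμ : μ ≠ 0) (h : a * b = μ • (b * a)) :
    bd * a = μ • (a * bd) :=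
  hb.inv_mul_eq_smul_of_commute h (hb.commute_of_mul_eq_smul hμ h)

end Banach

theorem mul {𝕜 R : Type*} [Field 𝕜] [Ring R] [Algebra 𝕜 R] {a ad b bd : R} {μ : 𝕜}
    (ha : IsPDrazinInv a ad) (hb : IsPDrazinInv b bd) (hμ : μ ≠ 0)
    (h : a * b = μ • (b * a)) (h₁ : bd * a = μ • (a * bd)) (h₂ : ad * b = μ⁻¹ • (b * ad))
    (h₃ : bd * ad = μ⁻¹ • (ad * bd)) : IsPDrazinInv (a * b) (bd * ad) := by
  have hba : b * a = μ⁻¹ • (a * b) := ((inv_smul_eq_iff₀ hμ).mpr h).symm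
  have hpb : Commute (a * ad) b :=
    calc a * ad * b = μ⁻¹ • (a * b * ad) := by rw [mul_assoc, h₂, mul_smul_comm, mul_assoc]
      _ = b * (a * ad) := by rw [h, smul_mul_assoc, inv_smul_smul₀ hμ, mul_assoc]
  have hqa : Commute (b * bd) ad :=
    calc b * bd * ad = μ⁻¹ • (b * ad * bd) := by rw [mul_assoc, h₃, mul_smul_comm, mul_assoc]
      _ = ad * (b * bd) := by rw [← smul_mul_assoc, ← h₂, mul_assoc]
  have hprod : a * b * (bd * ad) = a * ad * (b * bd) := by
    rw [mul_assoc a, ← mul_assoc b, hqa.eq, mul_assoc]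
  have hcomm : a * b * (bd * ad) = bd * ad * (a * b) :=
    calc a * b * (bd * ad) = a * bd * (b * ad) := by
          rw [mul_assoc a b, ← mul_assoc b, hb.1]; simp only [mul_assoc]
      _ = bd * a * (ad * b) := by rw [h₁, h₂, smul_mul_smul_comm, mul_inv_cancel₀ hμ, one_smul]
      _ = bd * ad * (a * b) := by
          simp only [mul_assoc]; rw [← mul_assoc a ad, ha.1]; simp only [mul_assoc]
  have hinner : bd * ad * (a * b) * (bd * ad) = bd * ad :=
    calc bd * ad * (a * b) * (bd * ad) = bd * (ad * a * ad) * (b * bd) := by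
          rw [mul_assoc _ (a * b), hprod]; simp only [mul_assoc]
      _ = bd * (b * bd) * ad := by rw [ha.2.1, mul_assoc, ← hqa.eq]; simp only [mul_assoc]
      _ = bd * ad := by rw [hb.inv_mul_mul]
  obtain ⟨m, ⟨hma, hmb⟩, hm⟩ := ((ha.eventually_memJacobson.and hb.eventually_memJacobson).and
    (eventually_ge_atTop 1)).exists
  refine ⟨hcomm, hinner, m, hm, ?_⟩
  have hsplit : b ^ m * (1 - a * ad * (b * bd)) =
      (1 - a * ad) * b ^ m + a * ad * (b ^ m * (1 - b * bd)) := by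
    rw [mul_sub, mul_one, ← mul_assoc, ← (hpb.pow_right m).eq]
    noncomm_ring
  rw [pow_sub_pow_succ_mul, hprod, mul_pow_eq_smul_pow_mul_pow hba, smul_mul_assoc, mul_assoc,
    hsplit, mul_add, ← mul_assoc, ← mul_assoc (a ^ m) (a * ad)]
  exact ((hma.mul_right _).add (hmb.mul_left _)).smul _

end IsPDrazinInv

theorem stmt14 {A : Type*} [NormedRing A] [NormedAlgebra ℂ A] [CompleteSpace A]
    (a ad b bd : A) (ha : IsPDrazinInv a ad) (hb : IsPDrazinInv b bd)
    (lam : ℂ) (hlam : lam ≠ 0) (h : a * b = lam • (b * a)) :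
    IsPDrazinInv (a * b) (bd * ad) ∧ bd * ad = lam⁻¹ • (ad * bd) := by
  have hba : b * a = lam⁻¹ • (a * b) := ((inv_smul_eq_iff₀ hlam).mpr h).symm
  have h₂ : ad * b = lam⁻¹ • (b * ad) := ha.inv_mul_eq_smul (inv_ne_zero hlam) hba
  have h₃ : bd * ad = lam⁻¹ • (ad * bd) := hb.inv_mul_eq_smul (inv_ne_zero hlam) h₂
  exact ⟨ha.mul hb hlam h (hb.inv_mul_eq_smul hlam h) h₂ h₃, h₃⟩
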